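/- arXiv:2005.00231 — 3 statements merged into one kernel-verified Lean document; each statement's English description precedes it below -/
import Mathlib

section
/- The invariant subalgebra R₀ is isomorphic, as a ℂ-algebra, to the quotient ℂ[T₄,T₆,T₈,T₁₀,S₁₀,T₁₂]/(S₁₀² − (T₁₀² − 4T₈T₁₂)). More precisely, the ℂ-algebra homomorphism from the polynomial ring ℂ[T₄,T₆,T₈,T₁₀,S₁₀,T₁₂] to R sending T₄ ↦ t₄, T₆ ↦ t₆, T₈ ↦ t₈, T₁₀ ↦ t₁₀, S₁₀ ↦ s₁₀, T₁₂ ↦ t₁₂ has image exactly R₀ and kernel exactly the principal ideal generated by S₁₀² − (T₁₀² − 4T₈T₁₂). -/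
/-!
`μ_λ` scales the monomial `u^m` by `λ^(2(m₁ + m₄ - m₃ - m₆))`, so an invariant is a combination of
monomials with `m₁ + m₄ = m₃ + m₆`. Pairing each of `u₁, u₄` with one of `u₃, u₆` writes such a
monomial as a product of `u₂, u₅, u₁u₃, u₁u₆, u₃u₄, u₄u₆`, all in the image because
`u₁u₆, u₃u₄ = (t₁₀ ± s₁₀) / 2`.

For the kernel, divide by the relation, which is monic in `S₁₀`: every `f` is congruent to
`b S₁₀ + a` with `a, b ∈ ℂ[T₄,T₆,T₈,T₁₀,T₁₂]`. The swap `u₁ ↔ u₃, u₄ ↔ u₆` fixes `t₄, …, t₁₂` and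
negates `s₁₀`, so `φ(b S₁₀ + a) = 0` forces `φ(a) = φ(b) = 0`. Finally `φ` is injective on
`ℂ[T₄,T₆,T₈,T₁₀,T₁₂]`: since `(u₁T + u₄)(u₃T + u₆) = t₈T² + t₁₀T + t₁₂` and every quadratic splits
over `ℂ`, the map `u ↦ (t₄, t₆, t₈, t₁₀, t₁₂)(u)` is onto `ℂ⁵`.
-/

open MvPolynomial

/-- The ℂ-algebra endomorphism `μ_λ` of `R = ℂ[u₁,…,u₆]` determined by
`u₁ ↦ λ²u₁, u₂ ↦ u₂, u₃ ↦ λ⁻²u₃, u₄ ↦ λ²u₄, u₅ ↦ u₅, u₆ ↦ λ⁻²u₆`. -/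
noncomputable def mu (l : ℂˣ) : MvPolynomial (Fin 6) ℂ →ₐ[ℂ] MvPolynomial (Fin 6) ℂ :=
  aeval ![C ((l : ℂ) ^ 2) * X 0, X 1, C (((l : ℂ)⁻¹) ^ 2) * X 2,
          C ((l : ℂ) ^ 2) * X 3, X 4, C (((l : ℂ)⁻¹) ^ 2) * X 5]

noncomputable def t4 : MvPolynomial (Fin 6) ℂ := X 1
noncomputable def t6 : MvPolynomial (Fin 6) ℂ := X 4
noncomputable def t8 : MvPolynomial (Fin 6) ℂ := X 0 * X 2
noncomputable def t10 : MvPolynomial (Fin 6) ℂ := X 0 * X 5 + X 2 * X 3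
noncomputable def s10 : MvPolynomial (Fin 6) ℂ := X 0 * X 5 - X 2 * X 3
noncomputable def t12 : MvPolynomial (Fin 6) ℂ := X 3 * X 5

/-- The ℂ-algebra homomorphism `ℂ[T₄,T₆,T₈,T₁₀,S₁₀,T₁₂] → R` sending
`T₄ ↦ t₄, T₆ ↦ t₆, T₈ ↦ t₈, T₁₀ ↦ t₁₀, S₁₀ ↦ s₁₀, T₁₂ ↦ t₁₂`
(variable indices `0,1,2,3,4,5` correspond to `T₄,T₆,T₈,T₁₀,S₁₀,T₁₂`). -/
noncomputable def phi : MvPolynomial (Fin 6) ℂ →ₐ[ℂ] MvPolynomial (Fin 6) ℂ :=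
  aeval ![t4, t6, t8, t10, s10, t12]

section DiagonalScaling

variable {R σ : Type*} [CommSemiring R]

theorem aeval_C_mul_X_monomial (c : σ → R) (n : σ →₀ ℕ) (a : R) :
    aeval (fun i => C (c i) * X i) (monomial n a) =
      monomial n (a * n.prod fun i e => c i ^ e) := by
  rw [aeval_monomial, monomial_eq, algebraMap_eq, C_mul, mul_assoc, map_finsuppProd]
  simp only [mul_pow, Finsupp.prod_mul, ← map_pow]

theorem coeff_aeval_C_mul_X (c : σ → R) (f : MvPolynomial σ R) (m : σ →₀ ℕ) :
    coeff m (aeval (fun i => C (c i) * X i) f) = coeff m f * m.prod fun i e => c i ^ e := by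
  classical
  induction f using MvPolynomial.induction_on' with
  | monomial n a =>
    rw [aeval_C_mul_X_monomial, coeff_monomial, coeff_monomial]
    split_ifs with h <;> simp [h]
  | add p q hp hq => simp only [map_add, coeff_add, hp, hq, add_mul]

end DiagonalScaling

theorem exists_linear_factors_of_quadratic {K : Type*} [Field K] [IsAlgClosed K] (x y z : K) :
    ∃ a b c d : K, a * c = x ∧ a * d + b * c = y ∧ b * d = z := by
  rcases eq_or_ne x 0 with rfl | hx
  · exact ⟨0, 1, y, z, by ring, by ring, by ring⟩
  · obtain ⟨r, hr⟩ := IsAlgClosed.exists_root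
      (Polynomial.C x * Polynomial.X ^ 2 + Polynomial.C y * Polynomial.X + Polynomial.C z)
      (by rw [Polynomial.degree_quadratic hx]; decide)
    refine ⟨1, -r, x, y + x * r, by ring, by ring, ?_⟩
    simp only [Polynomial.IsRoot, Polynomial.eval_add, Polynomial.eval_mul, Polynomial.eval_C,
      Polynomial.eval_pow, Polynomial.eval_X] at hr
    linear_combination -hr

theorem mu_eq_aeval (l : ℂˣ) :
    mu l = aeval fun i =>
      C (![(l : ℂ) ^ 2, 1, (l : ℂ)⁻¹ ^ 2, (l : ℂ) ^ 2, 1, (l : ℂ)⁻¹ ^ 2] i) * X i := by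
  unfold mu
  congr 1
  funext i
  fin_cases i <;> simp

theorem coeff_mu (l : ℂˣ) (f : MvPolynomial (Fin 6) ℂ) (m : Fin 6 →₀ ℕ) :
    coeff m (mu l f) = coeff m f * (l : ℂ) ^ (2 * (m 0 + m 3)) / (l : ℂ) ^ (2 * (m 2 + m 5)) := by
  rw [mu_eq_aeval, coeff_aeval_C_mul_X, Finsupp.prod_fintype _ _ (by simp), Fin.prod_univ_six]
  simp only [Matrix.cons_val_zero, Matrix.cons_val_one, Matrix.cons_val, inv_pow, one_pow,
    mul_one]
  field_simp
  ring

theorem balanced_of_mem_support {f : MvPolynomial (Fin 6) ℂ} (hf : ∀ l, mu l f = f)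
    {m : Fin 6 →₀ ℕ} (hm : m ∈ f.support) : m 0 + m 3 = m 2 + m 5 := by
  have h := coeff_mu (Units.mk0 2 two_ne_zero) f m
  rw [hf, Units.val_mk0, mul_div_assoc, eq_comm, mul_eq_left₀ (mem_support_iff.mp hm),
    div_eq_one_iff_eq (by simp)] at h
  have : 2 ^ (2 * (m 0 + m 3)) = 2 ^ (2 * (m 2 + m 5)) := by exact_mod_cast h
  have := Nat.pow_right_injective le_rfl this
  omega

theorem mu_comp_phi (l : ℂˣ) : (mu l).comp phi = phi := by
  have hC : (C (l : ℂ) ^ 2 * C ((l : ℂ) ^ 2)⁻¹ : MvPolynomial (Fin 6) ℂ) = 1 := by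
    rw [← map_pow, ← C_mul, mul_inv_cancel₀ (by simp), C_1]
  ext i : 1
  fin_cases i <;> simp [phi, mu, t4, t6, t8, t10, s10, t12]
  · linear_combination X 0 * X 2 * hC
  · linear_combination (X 0 * X 5 + X 2 * X 3) * hC
  · linear_combination (X 0 * X 5 - X 2 * X 3) * hC
  · linear_combination X 3 * X 5 * hC

theorem generators_mem_range_phi :
    X 1 ∈ phi.range ∧ X 4 ∈ phi.range ∧ X 0 * X 2 ∈ phi.range ∧ X 0 * X 5 ∈ phi.range ∧
      X 2 * X 3 ∈ phi.range ∧ X 3 * X 5 ∈ phi.range := by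
  have h2 : (C 2⁻¹ * 2 : MvPolynomial (Fin 6) ℂ) = 1 := by
    rw [← map_ofNat C 2, ← C_mul, inv_mul_cancel₀ two_ne_zero, C_1]
  refine ⟨⟨X 0, by simp [phi, t4]⟩, ⟨X 1, by simp [phi, t6]⟩, ⟨X 2, by simp [phi, t8]⟩,
    ⟨C 2⁻¹ * (X 3 + X 4), ?_⟩, ⟨C 2⁻¹ * (X 3 - X 4), ?_⟩, ⟨X 5, by simp [phi, t12]⟩⟩
  · simp only [phi, t10, s10, AlgHom.toRingHom_eq_coe, RingHom.coe_coe, map_mul, map_add,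
      algHom_C, algebraMap_eq, aeval_X, Matrix.cons_val, add_add_sub_cancel]
    linear_combination X 0 * X 5 * h2
  · simp only [phi, t10, s10, AlgHom.toRingHom_eq_coe, RingHom.coe_coe, map_mul, map_sub,
      algHom_C, algebraMap_eq, aeval_X, Matrix.cons_val, add_sub_sub_cancel]
    linear_combination X 2 * X 3 * h2

theorem monomial_mem_range_phi {m : Fin 6 →₀ ℕ} (hm : m 0 + m 3 = m 2 + m 5) (c : ℂ) :
    monomial m c ∈ phi.range := by
  obtain ⟨h1, h4, h02, h05, h23, h35⟩ := generators_mem_range_phi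
  rw [monomial_eq, Finsupp.prod_fintype _ _ (by simp), Fin.prod_univ_six]
  refine mul_mem (by simpa using phi.range.algebraMap_mem c) ?_
  rcases le_total (m 0) (m 2) with h | h
  · obtain ⟨k, hk⟩ := Nat.exists_eq_add_of_le h
    rw [hk, show m 3 = k + m 5 by omega, show (X 0 ^ m 0 * X 1 ^ m 1 * X 2 ^ (m 0 + k) *
      X 3 ^ (k + m 5) * X 4 ^ m 4 * X 5 ^ m 5 : MvPolynomial (Fin 6) ℂ) =
        (X 0 * X 2) ^ m 0 * (X 2 * X 3) ^ k * (X 3 * X 5) ^ m 5 * X 1 ^ m 1 * X 4 ^ m 4 by ring]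
    apply_rules [mul_mem, pow_mem]
  · obtain ⟨k, hk⟩ := Nat.exists_eq_add_of_le h
    rw [hk, show m 5 = k + m 3 by omega, show (X 0 ^ (m 2 + k) * X 1 ^ m 1 * X 2 ^ m 2 *
      X 3 ^ m 3 * X 4 ^ m 4 * X 5 ^ (k + m 3) : MvPolynomial (Fin 6) ℂ) =
        (X 0 * X 2) ^ m 2 * (X 0 * X 5) ^ k * (X 3 * X 5) ^ m 3 * X 1 ^ m 1 * X 4 ^ m 4 by ring]
    apply_rules [mul_mem, pow_mem]

theorem mem_range_phi_iff (f : MvPolynomial (Fin 6) ℂ) :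
    f ∈ phi.range ↔ ∀ l : ℂˣ, mu l f = f := by
  refine ⟨fun ⟨p, hp⟩ l => hp ▸ AlgHom.congr_fun (mu_comp_phi l) p, fun hf => ?_⟩
  rw [f.as_sum]
  exact Subalgebra.sum_mem _ fun m hm => monomial_mem_range_phi (balanced_of_mem_support hf hm) _

noncomputable def includeT : MvPolynomial (Fin 5) ℂ →ₐ[ℂ] MvPolynomial (Fin 6) ℂ :=
  rename (Fin.succAbove 4)

theorem eval_phi_includeT (u : Fin 6 → ℂ) (p : MvPolynomial (Fin 5) ℂ) :
    eval u (phi (includeT p)) =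
      eval ![u 1, u 4, u 0 * u 2, u 0 * u 5 + u 2 * u 3, u 3 * u 5] p := by
  change aeval u (phi (includeT p)) = aeval _ p
  rw [includeT, phi, aeval_rename, comp_aeval_apply]
  congr 2
  funext i
  fin_cases i <;> simp [t4, t6, t8, t10, t12, Fin.succAbove]

theorem phi_includeT_injective : Function.Injective (phi.comp includeT) := by
  refine (injective_iff_map_eq_zero _).mpr fun p hp => MvPolynomial.funext fun v => ?_
  obtain ⟨a, b, c, d, hx, hy, hz⟩ := exists_linear_factors_of_quadratic (v 2) (v 3) (v 4)
  have h := congrArg (eval ![a, v 0, c, b, v 1, d]) hp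
  rw [AlgHom.comp_apply, eval_phi_includeT, map_zero] at h
  rw [map_zero, ← h]
  refine congrArg (fun w => eval w p) (funext fun i => ?_)
  fin_cases i <;> simp [← hx, ← hy, ← hz, mul_comm]

theorem phi_relation : phi (X 4 ^ 2 - (X 3 ^ 2 - 4 * X 2 * X 5)) = 0 := by
  simp only [phi, t8, t10, s10, t12, aeval_eq_bind₁, map_sub, map_pow, map_mul, map_ofNat,
    bind₁_X_right, Matrix.cons_val]
  ring

def swapU : Fin 6 → Fin 6 := ![2, 1, 0, 5, 4, 3]

theorem rename_swapU_phi_includeT (p : MvPolynomial (Fin 5) ℂ) :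
    rename swapU (phi (includeT p)) = phi (includeT p) := by
  suffices h : (rename swapU).comp (phi.comp includeT) = phi.comp includeT from
    AlgHom.congr_fun h p
  ext i : 1
  fin_cases i <;> simp [phi, includeT, swapU, Fin.succAbove, t4, t6, t8, t10, t12] <;> ring

theorem rename_swapU_s10 : rename swapU s10 = -s10 := by
  simp [swapU, s10]

theorem s10_ne_zero : s10 ≠ 0 := fun h => by
  simpa [s10] using congrArg (eval ![1, 0, 0, 0, 0, 1]) h

theorem eq_zero_of_phi_linear_eq_zero {a b : MvPolynomial (Fin 5) ℂ}
    (h : phi (includeT b * X 4 + includeT a) = 0) : a = 0 ∧ b = 0 := by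
  have hX : phi (X 4) = s10 := by simp [phi]
  rw [map_add, map_mul, hX] at h
  have h' := congrArg (rename swapU) h
  rw [map_add, map_mul, rename_swapU_phi_includeT, rename_swapU_phi_includeT, rename_swapU_s10,
    map_zero] at h'
  have ha : phi (includeT a) * 2 = 0 := by linear_combination h + h'
  have hb : phi (includeT b) * (2 * s10) = 0 := by linear_combination h - h'
  have hinj := (injective_iff_map_eq_zero _).mp phi_includeT_injective
  exact ⟨hinj a ((mul_eq_zero_iff_right two_ne_zero).mp ha),
    hinj b ((mul_eq_zero_iff_right (mul_ne_zero two_ne_zero s10_ne_zero)).mp hb)⟩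

noncomputable def equivPolynomialS10 :
    MvPolynomial (Fin 6) ℂ ≃ₐ[ℂ] Polynomial (MvPolynomial (Fin 5) ℂ) :=
  (renameEquiv ℂ (finSuccEquiv' 4)).trans (optionEquivLeft ℂ (Fin 5))

theorem equivPolynomialS10_X_four : equivPolynomialS10 (X 4) = Polynomial.X := by
  simp [equivPolynomialS10]

theorem equivPolynomialS10_includeT (p : MvPolynomial (Fin 5) ℂ) :
    equivPolynomialS10 (includeT p) = Polynomial.C p := by
  suffices h : (equivPolynomialS10 : _ →ₐ[ℂ] _).comp includeT = Polynomial.CAlgHom from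
    AlgHom.congr_fun h p
  ext i : 1
  simp [equivPolynomialS10, includeT]

theorem exists_eq_relation_mul_add (f : MvPolynomial (Fin 6) ℂ) :
    ∃ q a b, f = (X 4 ^ 2 - (X 3 ^ 2 - 4 * X 2 * X 5)) * q + (includeT b * X 4 + includeT a) := by
  set e := equivPolynomialS10
  set G := Polynomial.X ^ 2 - Polynomial.C (X 3 ^ 2 - 4 * X 2 * X 4 : MvPolynomial (Fin 5) ℂ)
  have hG : e (X 4 ^ 2 - (X 3 ^ 2 - 4 * X 2 * X 5)) = G := by
    have : (X 3 ^ 2 - 4 * X 2 * X 5 : MvPolynomial (Fin 6) ℂ) =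
        includeT (X 3 ^ 2 - 4 * X 2 * X 4) := by
      simp [includeT, Fin.succAbove, map_ofNat]
    rw [this, map_sub, map_pow, equivPolynomialS10_X_four, equivPolynomialS10_includeT]
  have hmonic : G.Monic := Polynomial.monic_X_pow_sub_C _ two_ne_zero
  have hG2 : G.natDegree = 2 := Polynomial.natDegree_X_pow_sub_C
  have hdeg : (e f %ₘ G).natDegree ≤ 1 := by
    have := Polynomial.natDegree_modByMonic_lt (e f) hmonic (fun h => by simp [h] at hG2)
    omega
  refine ⟨e.symm (e f /ₘ G), (e f %ₘ G).coeff 0, (e f %ₘ G).coeff 1, e.injective ?_⟩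
  rw [map_add, map_mul, map_add, map_mul, hG, e.apply_symm_apply, equivPolynomialS10_includeT,
    equivPolynomialS10_includeT, equivPolynomialS10_X_four,
    ← Polynomial.eq_X_add_C_of_natDegree_le_one hdeg, add_comm, Polynomial.modByMonic_add_div]

theorem ker_phi : RingHom.ker (phi : MvPolynomial (Fin 6) ℂ →+* MvPolynomial (Fin 6) ℂ) =
    Ideal.span {(X 4) ^ 2 - ((X 3) ^ 2 - 4 * X 2 * X 5)} := by
  refine le_antisymm (fun f hf => ?_) ?_
  · obtain ⟨q, a, b, rfl⟩ := exists_eq_relation_mul_add f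
    rw [RingHom.mem_ker] at hf
    have h : phi (includeT b * X 4 + includeT a) = 0 := by
      simpa [phi_relation] using hf
    obtain ⟨rfl, rfl⟩ := eq_zero_of_phi_linear_eq_zero h
    simpa using Ideal.mul_mem_right q _ (Ideal.mem_span_singleton_self _)
  · rw [Ideal.span_le, Set.singleton_subset_iff]
    exact phi_relation

theorem image_and_kernel_of_phi :
    (∀ f : MvPolynomial (Fin 6) ℂ, f ∈ phi.range ↔ ∀ l : ℂˣ, mu l f = f) ∧
    RingHom.ker (phi : MvPolynomial (Fin 6) ℂ →+* MvPolynomial (Fin 6) ℂ) =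
      Ideal.span {(X 4) ^ 2 - ((X 3) ^ 2 - 4 * X 2 * X 5)} :=
  ⟨mem_range_phi_iff, ker_phi⟩
end

section
/- Let O(G₁) = {g ∈ GL₆(ℤ) : gᵀ·G₁·g = G₁}, and let Γ₁ = {g ∈ O(G₁) : all entries of (g − I₆)·G₁⁻¹ are integers} (the subgroup acting trivially on the discriminant group G₁⁻¹ℤ⁶/ℤ⁶). Let σ₁ ∈ GL₆(ℤ) be the block-diagonal matrix diag(I₄, [[0,−1],[−1,0]]) (the reflection along the (−4)-vector e₅ + e₆). Then Γ₁ is a normal subgroup of O(G₁) of index 2, σ₁ ∈ O(G₁) but σ₁ ∉ Γ₁, and O(G₁) is the union of Γ₁ and Γ₁·σ₁; that is, the quotient O(G₁)/Γ₁ is generated by the class of σ₁. -/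
open Matrix

/-- The Gram matrix of the even lattice `U ⊥ U ⊥ ⟨−2⟩ ⊥ ⟨−2⟩`. -/
def G1 : Matrix (Fin 6) (Fin 6) ℤ :=
  !![0, 1, 0, 0, 0, 0;
     1, 0, 0, 0, 0, 0;
     0, 0, 0, 1, 0, 0;
     0, 0, 1, 0, 0, 0;
     0, 0, 0, 0, -2, 0;
     0, 0, 0, 0, 0, -2]

/-- `O(G₁) = {g ∈ GL₆(ℤ) : gᵀ G₁ g = G₁}`. -/
def OG1 : Subgroup (Matrix (Fin 6) (Fin 6) ℤ)ˣ where
  carrier := {g | (g : Matrix (Fin 6) (Fin 6) ℤ)ᵀ * G1 * g = G1}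
  one_mem' := by simp
  mul_mem' := by
    intro a b ha hb
    show (↑(a * b) : Matrix (Fin 6) (Fin 6) ℤ)ᵀ * G1 * (↑(a * b) : Matrix (Fin 6) (Fin 6) ℤ) = G1
    rw [Units.val_mul, Matrix.transpose_mul]
    calc (↑b : Matrix (Fin 6) (Fin 6) ℤ)ᵀ * (↑a : Matrix (Fin 6) (Fin 6) ℤ)ᵀ * G1 * ((↑a : Matrix (Fin 6) (Fin 6) ℤ) * (↑b : Matrix (Fin 6) (Fin 6) ℤ))
        = (↑b : Matrix (Fin 6) (Fin 6) ℤ)ᵀ * ((↑a : Matrix (Fin 6) (Fin 6) ℤ)ᵀ * G1 * (↑a : Matrix (Fin 6) (Fin 6) ℤ)) * (↑b : Matrix (Fin 6) (Fin 6) ℤ) := by noncomm_ring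
      _ = (↑b : Matrix (Fin 6) (Fin 6) ℤ)ᵀ * G1 * (↑b : Matrix (Fin 6) (Fin 6) ℤ) := by rw [ha]
      _ = G1 := hb
  inv_mem' := by
    intro a ha
    show ((a⁻¹).val)ᵀ * G1 * (a⁻¹).val = G1
    have h1 : a.val * (a⁻¹).val = 1 := by
      rw [← Units.val_mul, mul_inv_cancel, Units.val_one]
    have key : ((a⁻¹).val)ᵀ * ((a.val)ᵀ * G1 * a.val) * (a⁻¹).val = G1 := by
      calc ((a⁻¹).val)ᵀ * ((a.val)ᵀ * G1 * a.val) * (a⁻¹).val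
          = (a.val * (a⁻¹).val)ᵀ * G1 * (a.val * (a⁻¹).val) := by
            rw [Matrix.transpose_mul]; noncomm_ring
        _ = G1 := by rw [h1]; simp
    rw [ha] at key
    exact key

/-- `g` acts trivially on the discriminant group: all entries of `(g − I₆)·G₁⁻¹`
are integers (computed in `ℚ`). -/
def DiscTrivial (g : (Matrix (Fin 6) (Fin 6) ℤ)ˣ) : Prop :=
  ∀ i j : Fin 6, ∃ n : ℤ,
    ((((g : Matrix (Fin 6) (Fin 6) ℤ)).map (Int.cast : ℤ → ℚ) - 1) *
      (G1.map (Int.cast : ℤ → ℚ))⁻¹) i j = n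

/-- The reflection `σ₁` along the `(−4)`-vector `e₅ + e₆`:
`diag(I₄, [[0,−1],[−1,0]])`. -/
def sigma1 : Matrix (Fin 6) (Fin 6) ℤ :=
  !![1, 0, 0, 0, 0, 0;
     0, 1, 0, 0, 0, 0;
     0, 0, 1, 0, 0, 0;
     0, 0, 0, 1, 0, 0;
     0, 0, 0, 0, 0, -1;
     0, 0, 0, 0, -1, 0]

/-!
Reduced mod 2, an isometry `g` of `G₁` acts on the discriminant group `G₁⁻¹ℤ⁶/ℤ⁶ ≅ 𝔽₂²` through
the `2 × 2` block of `g mod 2` on the coordinates `e₅, e₆`, and `Γ₁` is the kernel of this action.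
Because `g` maps `G₁⁻¹ℤ⁶` into itself, the first four entries of its last two columns are even;
because `g` also preserves the dual form `2·G₁⁻¹ ≡ diag(0,0,0,0,1,1) (mod 2)`, the block is
orthogonal over `𝔽₂`, hence the identity or the swap. The swap is realised by `σ₁`, so each
isometry lies in `Γ₁` or in `Γ₁·σ₁`, and not both.
-/

namespace Matrix

variable {R n : Type*} [CommRing R] [Fintype n] [DecidableEq n]

theorem mul_eq_transpose_inv_mul_of_transpose_mul_mul_eq {G : Matrix n n R}
    {g : (Matrix n n R)ˣ} (hg : (g : Matrix n n R)ᵀ * G * g = G) :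
    G * g = (↑g⁻¹ : Matrix n n R)ᵀ * G := by
  calc G * g = (↑g * ↑g⁻¹ : Matrix n n R)ᵀ * G * g := by simp
    _ = (↑g⁻¹ : Matrix n n R)ᵀ * ((g : Matrix n n R)ᵀ * G * g) := by
      rw [transpose_mul]; noncomm_ring
    _ = (↑g⁻¹ : Matrix n n R)ᵀ * G := by rw [hg]

theorem mul_mul_transpose_eq_of_transpose_mul_mul_eq [NoZeroDivisors R] {G G' : Matrix n n R}
    {c : R} (hc : c ≠ 0) (hGG' : G * G' = c • 1) (hG'G : G' * G = c • 1)
    {g : (Matrix n n R)ˣ} (hg : (g : Matrix n n R)ᵀ * G * g = G) :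
    g * G' * (g : Matrix n n R)ᵀ = G' := by
  have hdual : (g : Matrix n n R)ᵀ * G = G * (↑g⁻¹ : Matrix n n R) := by
    calc (g : Matrix n n R)ᵀ * G = (g : Matrix n n R)ᵀ * G * g * (↑g⁻¹ : Matrix n n R) := by
          simp [mul_assoc]
      _ = G * (↑g⁻¹ : Matrix n n R) := by rw [hg]
  have hG : g * G' * (g : Matrix n n R)ᵀ * G = G' * G := by
    rw [mul_assoc, hdual, ← mul_assoc, mul_assoc _ G', hG'G]
    simp
  apply smul_right_injective (Matrix n n R) hc
  calc c • (g * G' * (g : Matrix n n R)ᵀ) = g * G' * (g : Matrix n n R)ᵀ * G * G' := by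
        rw [mul_assoc _ G, hGG', mul_smul_comm, mul_one]
    _ = c • G' := by rw [hG, mul_assoc, hGG', mul_smul_comm, mul_one]

end Matrix

def twoG1Inv : Matrix (Fin 6) (Fin 6) ℤ :=
  !![0, 2, 0, 0, 0, 0;
     2, 0, 0, 0, 0, 0;
     0, 0, 0, 2, 0, 0;
     0, 0, 2, 0, 0, 0;
     0, 0, 0, 0, -1, 0;
     0, 0, 0, 0, 0, -1]

theorem G1_mul_twoG1Inv : G1 * twoG1Inv = (2 : ℤ) • 1 := by decide

theorem twoG1Inv_mul_G1 : twoG1Inv * G1 = (2 : ℤ) • 1 := by decide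

abbrev modTwo {n : Type*} [Fintype n] [DecidableEq n] : Matrix n n ℤ →+* Matrix n n (ZMod 2) :=
  (Int.castRingHom (ZMod 2)).mapMatrix

theorem map_intCast_eq_mapMatrix {R n : Type*} [Ring R] [Fintype n] [DecidableEq n]
    (M : Matrix n n ℤ) : M.map (Int.cast : ℤ → R) = (Int.castRingHom R).mapMatrix M := rfl

-- `2·G₁⁻¹` mod 2 (`modTwo_twoG1Inv`): the projection onto `e₅, e₆`, which are `4, 5` in `Fin 6`.
def discProj : Matrix (Fin 6) (Fin 6) (ZMod 2) := diagonal ![0, 0, 0, 0, 1, 1]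

theorem modTwo_twoG1Inv : modTwo twoG1Inv = discProj := by decide

theorem inv_map_G1 :
    (G1.map (Int.cast : ℤ → ℚ))⁻¹ = (2⁻¹ : ℚ) • twoG1Inv.map (Int.cast : ℤ → ℚ) := by
  apply inv_eq_right_inv
  rw [map_intCast_eq_mapMatrix, map_intCast_eq_mapMatrix, mul_smul_comm, ← map_mul,
    G1_mul_twoG1Inv, map_zsmul, map_one, ← Int.cast_smul_eq_zsmul ℚ, smul_smul]
  norm_num

theorem exists_intCast_eq_div_two_iff (m : ℤ) : (∃ n : ℤ, (m : ℚ) / 2 = n) ↔ (m : ZMod 2) = 0 := by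
  rw [ZMod.intCast_zmod_eq_zero_iff_dvd]
  refine ⟨fun ⟨n, hn⟩ => ⟨n, ?_⟩, fun ⟨n, hn⟩ => ⟨n, by rw [hn]; push_cast; ring⟩⟩
  rw [div_eq_iff two_ne_zero] at hn
  exact_mod_cast hn.trans (mul_comm _ _)

theorem discTrivial_iff (g : (Matrix (Fin 6) (Fin 6) ℤ)ˣ) :
    DiscTrivial g ↔ modTwo (g : Matrix (Fin 6) (Fin 6) ℤ) * discProj = discProj := by
  have hentry : ∀ i j, (((g : Matrix (Fin 6) (Fin 6) ℤ).map (Int.cast : ℤ → ℚ) - 1) *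
      (G1.map (Int.cast : ℤ → ℚ))⁻¹) i j = (((↑g - 1) * twoG1Inv) i j : ℚ) / 2 := by
    intro i j
    rw [inv_map_G1, mul_smul_comm, map_intCast_eq_mapMatrix, map_intCast_eq_mapMatrix,
      ← map_one (Int.castRingHom ℚ).mapMatrix, ← map_sub, ← map_mul]
    simp [div_eq_inv_mul]
  simp only [DiscTrivial, hentry, exists_intCast_eq_div_two_iff]
  rw [← sub_eq_zero, ← sub_one_mul, ← modTwo_twoG1Inv, ← map_one modTwo, ← map_sub, ← map_mul,
    ← Matrix.ext_iff]
  simp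

theorem ZMod.eq_one_or_eq_swap_of_orthonormal_rows {a b c d : ZMod 2}
    (hab : a * a + b * b = 1) (hcd : c * c + d * d = 1) (hac : a * c + b * d = 0) :
    a = 1 ∧ b = 0 ∧ c = 0 ∧ d = 1 ∨ a = 0 ∧ b = 1 ∧ c = 1 ∧ d = 0 := by
  revert a b c d; decide

theorem modTwo_G1_mul_self : modTwo G1 * modTwo G1 = 1 - discProj := by decide

theorem modTwo_G1_mul_discProj : modTwo G1 * discProj = 0 := by decide

theorem sigma1_mul_self : sigma1 * sigma1 = 1 := by decide

def sigma1Unit : (Matrix (Fin 6) (Fin 6) ℤ)ˣ := ⟨sigma1, sigma1, sigma1_mul_self, sigma1_mul_self⟩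

theorem val_sigma1Unit : (sigma1Unit : Matrix (Fin 6) (Fin 6) ℤ) = sigma1 := rfl

theorem sigma1Unit_mul_self : sigma1Unit * sigma1Unit = 1 := Units.ext sigma1_mul_self

theorem sigma1Unit_mem_OG1 : sigma1Unit ∈ OG1 := by
  show sigma1ᵀ * G1 * sigma1 = G1
  decide

theorem modTwo_sigma1_mul_discProj_comm :
    modTwo sigma1 * discProj = discProj * modTwo sigma1 := by decide

theorem modTwo_sigma1_mul_discProj_ne : modTwo sigma1 * discProj ≠ discProj := by decide

def Gamma1 : Subgroup (Matrix (Fin 6) (Fin 6) ℤ)ˣ :=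
  OG1 ⊓ (MulAction.stabilizer (Matrix (Fin 6) (Fin 6) (ZMod 2))ˣ discProj).comap
    (Units.map modTwo.toMonoidHom)

section

variable {g : (Matrix (Fin 6) (Fin 6) ℤ)ˣ}

theorem discProj_mul_modTwo_mul_discProj (hg : g ∈ OG1) :
    discProj * modTwo (g : Matrix (Fin 6) (Fin 6) ℤ) * discProj =
      modTwo (g : Matrix (Fin 6) (Fin 6) ℤ) * discProj := by
  have hcol := congrArg modTwo (mul_eq_transpose_inv_mul_of_transpose_mul_mul_eq hg)
  rw [map_mul, map_mul] at hcol
  have h : (1 - discProj) * modTwo (g : Matrix (Fin 6) (Fin 6) ℤ) * discProj = 0 := by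
    rw [← modTwo_G1_mul_self, mul_assoc (modTwo G1), hcol, mul_assoc, mul_assoc,
      modTwo_G1_mul_discProj, mul_zero, mul_zero]
  rw [sub_mul, sub_mul, one_mul, sub_eq_zero] at h
  exact h.symm

theorem modTwo_block_eq_one_or_swap (hg : g ∈ OG1) :
    let a := modTwo (g : Matrix (Fin 6) (Fin 6) ℤ)
    a 4 4 = 1 ∧ a 4 5 = 0 ∧ a 5 4 = 0 ∧ a 5 5 = 1 ∨
      a 4 4 = 0 ∧ a 4 5 = 1 ∧ a 5 4 = 1 ∧ a 5 5 = 0 := by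
  have hrow := congrArg modTwo (mul_mul_transpose_eq_of_transpose_mul_mul_eq two_ne_zero
    G1_mul_twoG1Inv twoG1Inv_mul_G1 hg)
  rw [map_mul, map_mul, modTwo_twoG1Inv] at hrow
  apply ZMod.eq_one_or_eq_swap_of_orthonormal_rows <;>
    [have := congrFun₂ hrow 4 4; have := congrFun₂ hrow 5 5; have := congrFun₂ hrow 4 5] <;>
    simpa [mul_apply, Fin.sum_univ_six, discProj] using this

theorem modTwo_mul_discProj_eq_or (hg : g ∈ OG1) :
    modTwo (g : Matrix (Fin 6) (Fin 6) ℤ) * discProj = discProj ∨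
      modTwo (g : Matrix (Fin 6) (Fin 6) ℤ) * discProj = modTwo sigma1 * discProj := by
  rw [← discProj_mul_modTwo_mul_discProj hg]
  rcases modTwo_block_eq_one_or_swap hg with h | h <;> [left; right] <;> ext i j <;>
    fin_cases i <;> fin_cases j <;> simp_all [discProj, sigma1]

theorem mem_Gamma1 : g ∈ Gamma1 ↔ g ∈ OG1 ∧ DiscTrivial g := by
  simp [Gamma1, MulAction.mem_stabilizer_iff, Units.smul_def, discTrivial_iff]

theorem sigma1Unit_notMem_Gamma1 : sigma1Unit ∉ Gamma1 := by
  rw [mem_Gamma1, discTrivial_iff, val_sigma1Unit]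
  exact fun h => modTwo_sigma1_mul_discProj_ne h.2

theorem mul_sigma1Unit_mem_Gamma1_or_mem_Gamma1 (hg : g ∈ OG1) :
    g * sigma1Unit ∈ Gamma1 ∨ g ∈ Gamma1 := by
  simp only [mem_Gamma1, discTrivial_iff]
  rcases modTwo_mul_discProj_eq_or hg with h | h
  · exact Or.inr ⟨hg, h⟩
  · refine Or.inl ⟨mul_mem hg sigma1Unit_mem_OG1, ?_⟩
    calc modTwo (↑(g * sigma1Unit) : Matrix (Fin 6) (Fin 6) ℤ) * discProj
        = modTwo (g : Matrix (Fin 6) (Fin 6) ℤ) * discProj * modTwo sigma1 := by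
          rw [Units.val_mul, map_mul, val_sigma1Unit, mul_assoc, modTwo_sigma1_mul_discProj_comm,
            ← mul_assoc]
      _ = modTwo (sigma1 * sigma1) * discProj := by
          rw [h, mul_assoc, ← modTwo_sigma1_mul_discProj_comm, map_mul, mul_assoc]
      _ = discProj := by rw [sigma1_mul_self, map_one, one_mul]

end

/-- `Γ₁` is a normal subgroup of `O(G₁)` of index 2, `σ₁ ∈ O(G₁) \ Γ₁`, and
`O(G₁) = Γ₁ ∪ Γ₁·σ₁`. -/
theorem Gamma1_index_two_generated_by_sigma1 :
    ∃ (H : Subgroup (Matrix (Fin 6) (Fin 6) ℤ)ˣ) (s : (Matrix (Fin 6) (Fin 6) ℤ)ˣ),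
      (s : Matrix (Fin 6) (Fin 6) ℤ) = sigma1 ∧
      (∀ g : (Matrix (Fin 6) (Fin 6) ℤ)ˣ, g ∈ H ↔ g ∈ OG1 ∧ DiscTrivial g) ∧
      H ≤ OG1 ∧
      (H.subgroupOf OG1).Normal ∧
      (H.subgroupOf OG1).index = 2 ∧
      s ∈ OG1 ∧ s ∉ H ∧
      (∀ g ∈ OG1, g ∈ H ∨ ∃ h ∈ H, g = h * s) := by
  have hindex : Gamma1.relIndex OG1 = 2 :=
    Subgroup.relIndex_eq_two_iff_exists_notMem_and.mpr ⟨sigma1Unit, sigma1Unit_mem_OG1,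
      sigma1Unit_notMem_Gamma1, fun _ hb => mul_sigma1Unit_mem_Gamma1_or_mem_Gamma1 hb⟩
  refine ⟨Gamma1, sigma1Unit, rfl, fun _ => mem_Gamma1, inf_le_left,
    Subgroup.normal_of_index_eq_two hindex, hindex, sigma1Unit_mem_OG1, sigma1Unit_notMem_Gamma1,
    fun g hg => ?_⟩
  rcases mul_sigma1Unit_mem_Gamma1_or_mem_Gamma1 hg with h | h
  · refine Or.inr ⟨g * sigma1Unit, h, ?_⟩
    rw [mul_assoc, sigma1Unit_mul_self, mul_one]
  · exact Or.inl h
end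

section
/- Let O(G₃) = {g ∈ GL₆(ℤ) : gᵀ·G₃·g = G₃}. For every g ∈ O(G₃), the following are equivalent: (i) all entries of (g − I₆)·G₃⁻¹ are integers (i.e., g acts trivially on the discriminant group G₃⁻¹ℤ⁶/ℤ⁶); (ii) every entry of g − I₆ is an even integer (i.e., g ≡ I₆ mod 2). In other words, the kernel Γ₃ of the action of O(G₃) on the discriminant group equals the principal congruence subgroup Γ(2) of level 2. -/
open Matrix

/-- The Gram matrix of `U(2) ⊥ U(2) ⊥ ⟨−2⟩ ⊥ ⟨−2⟩`. -/
def G3 : Matrix (Fin 6) (Fin 6) ℤ :=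
  !![0, 2, 0, 0, 0, 0;
     2, 0, 0, 0, 0, 0;
     0, 0, 0, 2, 0, 0;
     0, 0, 2, 0, 0, 0;
     0, 0, 0, 0, -2, 0;
     0, 0, 0, 0, 0, -2]

/-- Auxiliary: half of `G3`; an integer matrix squaring to the identity. -/
def H3 : Matrix (Fin 6) (Fin 6) ℤ :=
  !![0, 1, 0, 0, 0, 0;
     1, 0, 0, 0, 0, 0;
     0, 0, 0, 1, 0, 0;
     0, 0, 1, 0, 0, 0;
     0, 0, 0, 0, -1, 0;
     0, 0, 0, 0, 0, -1]

lemma hGH3 : ∀ i j : Fin 6, (G3 * H3) i j = if i = j then 2 else 0 := by decide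

lemma hHH3 : H3 * H3 = 1 := by decide

lemma mapmul3 (A B : Matrix (Fin 6) (Fin 6) ℤ) :
    (A * B).map (Int.cast : ℤ → ℚ) = A.map Int.cast * B.map Int.cast := by
  have := Matrix.map_mul (M := B) (L := A) (f := Int.castRingHom ℚ)
  simpa using this

lemma hinv3 : (G3.map (Int.cast : ℤ → ℚ))⁻¹ = (2:ℚ)⁻¹ • H3.map Int.cast := by
  apply inv_eq_right_inv
  rw [Matrix.mul_smul, ← mapmul3]
  ext i j
  rw [Matrix.smul_apply, Matrix.map_apply, hGH3 i j]
  simp [Matrix.one_apply, apply_ite (Int.cast : ℤ → ℚ)]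

lemma evenmul3 (B C : Matrix (Fin 6) (Fin 6) ℤ) (h : ∀ i j, ∃ n, B i j = 2 * n) :
    ∀ i j, ∃ n, (B * C) i j = 2 * n := by
  intro i j
  have : (2:ℤ) ∣ (B * C) i j := by
    rw [Matrix.mul_apply]
    apply Finset.dvd_sum
    intro k _
    obtain ⟨n, hn⟩ := h i k
    exact ⟨n * C k j, by rw [hn]; ring⟩
  exact this

lemma keyiff3 (a : ℤ) : (∃ n : ℤ, (2:ℚ)⁻¹ * (a:ℚ) = n) ↔ (∃ n : ℤ, a = 2 * n) := by
  constructor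
  · rintro ⟨n, h⟩
    refine ⟨n, ?_⟩
    have h2 : (a:ℚ) = 2 * n := by
      field_simp at h; linarith
    exact_mod_cast h2
  · rintro ⟨n, rfl⟩
    exact ⟨n, by push_cast; ring⟩

/-- For `g ∈ O(G₃)`, triviality of the action on the discriminant group
(all entries of `(g − I₆)·G₃⁻¹` integral) is equivalent to `g ≡ I₆ mod 2`. -/
theorem discriminant_kernel_eq_principal_congruence :
    ∀ g : Matrix (Fin 6) (Fin 6) ℤ, IsUnit g.det → gᵀ * G3 * g = G3 →
      ((∀ i j : Fin 6, ∃ n : ℤ,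
          ((g.map (Int.cast : ℤ → ℚ) - 1) * (G3.map (Int.cast : ℤ → ℚ))⁻¹) i j = n) ↔
        (∀ i j : Fin 6, ∃ n : ℤ, (g - 1) i j = 2 * n)) := by
  intro g _ _
  have hmapsub : g.map (Int.cast : ℤ → ℚ) - 1 = (g - 1).map Int.cast := by
    ext i j
    simp [Matrix.map_apply, Matrix.sub_apply, Matrix.one_apply, apply_ite (Int.cast : ℤ → ℚ)]
  have hentry : ∀ i j, ((g.map (Int.cast : ℤ → ℚ) - 1) * (G3.map (Int.cast : ℤ → ℚ))⁻¹) i j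
      = (2:ℚ)⁻¹ * ((((g - 1) * H3) i j : ℤ) : ℚ) := by
    intro i j
    rw [hinv3, hmapsub, Matrix.mul_smul, Matrix.smul_apply, ← mapmul3]
    simp [Matrix.map_apply]
  constructor
  · intro h i j
    have h2 : ∀ i j, ∃ n, ((g - 1) * H3) i j = 2 * n := by
      intro i j
      exact (keyiff3 _).mp (by rw [← hentry]; exact h i j)
    have h3 := evenmul3 _ H3 h2 i j
    rwa [mul_assoc, hHH3, mul_one] at h3
  · intro h i j
    rw [hentry]
    exact (keyiff3 _).mpr (evenmul3 _ H3 h i j)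
end
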